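/- Let U ⊆ ℝ² be open, X : U → ℝ³ a C³ immersion with ⟨∂_s X, ∂_t X⟩ = 0, N := (∂_s X × ∂_t X)/|∂_s X × ∂_t X|, and suppose the coordinates are curvature lines: ∂_s N = λ ∂_s X, ∂_t N = μ ∂_t X. Let h : U → ℝ be C². For ε near 0 set Xᵉ := X + ε h N, Nᵉ := (∂_s Xᵉ × ∂_t Xᵉ)/|∂_s Xᵉ × ∂_t Xᵉ|, Yᵉ := Xᵉ − ⟨Xᵉ, Nᵉ⟩Nᵉ, and X̄ᵉ := (Nᵉ, Yᵉ); let V̄ := d/dε|_{ε=0} X̄ᵉ = (V̄₁, V̄₂) and X̄ := X̄⁰. Then at every point of U: Ω(V̄, ∂_s X̄) = ∂_s h and Ω(V̄, ∂_t X̄) = ∂_t h, where Ω(ξ,η) := ⟨ξ₂ − ⟨ξ₂,N⟩N, η₁⟩ − ⟨ξ₁, η₂ − ⟨η₂,N⟩N⟩. (This says the deformation of the normal congruence induced by the normal deformation h N of the surface is Hamiltonian, with Hamiltonian function h.) -/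

import Mathlib

noncomputable section

open Real

/-- Partial derivative of `f : ℝ² → E` in the first coordinate direction (the `s`-direction). -/
def pd1 {E : Type*} [NormedAddCommGroup E] [NormedSpace ℝ E]
    (f : ℝ × ℝ → E) (p : ℝ × ℝ) : E := fderiv ℝ f p (1, 0)

/-- Partial derivative of `f : ℝ² → E` in the second coordinate direction (the `t`-direction). -/
def pd2 {E : Type*} [NormedAddCommGroup E] [NormedSpace ℝ E]
    (f : ℝ × ℝ → E) (p : ℝ × ℝ) : E := fderiv ℝ f p (0, 1)

/-- Euclidean inner product on ℝ³. -/
def dot3 (v w : Fin 3 → ℝ) : ℝ := v 0 * w 0 + v 1 * w 1 + v 2 * w 2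

/-- Cross product on ℝ³. -/
def cross3 (v w : Fin 3 → ℝ) : Fin 3 → ℝ :=
  ![v 1 * w 2 - v 2 * w 1, v 2 * w 0 - v 0 * w 2, v 0 * w 1 - v 1 * w 0]

/-- Euclidean norm on ℝ³. -/
def norm3 (v : Fin 3 → ℝ) : ℝ := Real.sqrt (dot3 v v)

/-- Normalization of a vector of ℝ³. -/
def unit3 (v : Fin 3 → ℝ) : Fin 3 → ℝ := (norm3 v)⁻¹ • v

/-- The canonical symplectic form of `TS²` at the point `(N,·)`, evaluated on tangent
vectors written as pairs `ξ = (Pξ, ξ₂)`: `Ω(ξ,η) = ⟨Kξ, Pη⟩ − ⟨Pξ, Kη⟩`, where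
`Kξ = ξ₂ − ⟨ξ₂,N⟩N`. -/
def Ωcong (N : Fin 3 → ℝ) (ξ η : (Fin 3 → ℝ) × (Fin 3 → ℝ)) : ℝ :=
  dot3 (ξ.2 - dot3 ξ.2 N • N) η.1 - dot3 ξ.1 (η.2 - dot3 η.2 N • N)

/-! At a point write `a = ∂ₛX`, `b = ∂ₜX`, `n = N`. Since `∂ₛN = λ a` and `∂ₜN = μ b`, the
deformed frame is `(a + ε (hₛ n + h λ a), b + ε (hₜ n + h μ b))`, so the variation `V = V̄₁`
of the Gauss map is tangent and, differentiating `⟨Nᵉ, ∂ₛXᵉ⟩ = 0`, satisfies `⟨V, a⟩ = -hₛ`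
(and `⟨V, b⟩ = -hₜ`). The `K`-part of `V̄` is `-⟨X, n⟩ V` and that of `∂ₛX̄` is
`(1 - λ ⟨X, n⟩) a`, so `Ω(V̄, ∂ₛX̄) = -λ ⟨X, n⟩ ⟨V, a⟩ - (1 - λ ⟨X, n⟩) ⟨V, a⟩ = -⟨V, a⟩ = hₛ`. -/

theorem isBilinearMap_dot3 : IsBilinearMap ℝ dot3 := by
  constructor <;> intros <;> simp only [dot3, Pi.add_apply, Pi.smul_apply, smul_eq_mul] <;> ring

def dot3L : (Fin 3 → ℝ) →L[ℝ] (Fin 3 → ℝ) →L[ℝ] ℝ := isBilinearMap_dot3.toContinuousBilinearMap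

def cross3L : (Fin 3 → ℝ) →L[ℝ] (Fin 3 → ℝ) →L[ℝ] Fin 3 → ℝ :=
  (crossProduct : (Fin 3 → ℝ) →ₗ[ℝ] (Fin 3 → ℝ) →ₗ[ℝ] Fin 3 → ℝ).toContinuousBilinearMap

@[simp]
theorem dot3L_apply (v w : Fin 3 → ℝ) : dot3L v w = dot3 v w := rfl

@[simp]
theorem cross3L_apply (v w : Fin 3 → ℝ) : cross3L v w = cross3 v w := cross_apply v w

theorem dot3_eq_dotProduct (v w : Fin 3 → ℝ) : dot3 v w = v ⬝ᵥ w :=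
  (Matrix.vec3_dotProduct v w).symm

theorem cross3_eq_crossProduct (v w : Fin 3 → ℝ) : cross3 v w = crossProduct v w := rfl

theorem dot3_comm (v w : Fin 3 → ℝ) : dot3 v w = dot3 w v := by
  rw [dot3_eq_dotProduct, dot3_eq_dotProduct, dotProduct_comm]

theorem dot3_add_left (u v w : Fin 3 → ℝ) : dot3 (u + v) w = dot3 u w + dot3 v w :=
  isBilinearMap_dot3.add_left u v w

theorem dot3_sub_left (u v w : Fin 3 → ℝ) : dot3 (u - v) w = dot3 u w - dot3 v w := by
  simp only [dot3_eq_dotProduct, sub_dotProduct]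

theorem dot3_smul_left (c : ℝ) (v w : Fin 3 → ℝ) : dot3 (c • v) w = c * dot3 v w :=
  isBilinearMap_dot3.smul_left c v w

theorem dot3_smul_right (c : ℝ) (v w : Fin 3 → ℝ) : dot3 v (c • w) = c * dot3 v w :=
  isBilinearMap_dot3.smul_right c v w

theorem dot3_self_pos {v : Fin 3 → ℝ} (hv : v ≠ 0) : 0 < dot3 v v := by
  simpa [dot3_eq_dotProduct] using Matrix.dotProduct_self_star_pos_iff.mpr hv

theorem dot3_unit3_self {v : Fin 3 → ℝ} (hv : v ≠ 0) : dot3 (unit3 v) (unit3 v) = 1 := by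
  have hpos := dot3_self_pos hv
  have hr : norm3 v ^ 2 = dot3 v v := Real.sq_sqrt hpos.le
  have hr₀ : norm3 v ≠ 0 := (Real.sqrt_pos.mpr hpos).ne'
  simp only [unit3, dot3_smul_left, dot3_smul_right, ← hr]
  field_simp

theorem dot3_cross3_left (a b : Fin 3 → ℝ) : dot3 (cross3 a b) a = 0 := by
  rw [dot3_comm, dot3_eq_dotProduct, cross3_eq_crossProduct, dot_self_cross]

theorem dot3_cross3_right (a b : Fin 3 → ℝ) : dot3 (cross3 a b) b = 0 := by
  rw [dot3_comm, dot3_eq_dotProduct, cross3_eq_crossProduct, dot_cross_self]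

theorem dot3_unit3_cross3_left (a b : Fin 3 → ℝ) : dot3 a (unit3 (cross3 a b)) = 0 := by
  rw [dot3_comm, unit3, dot3_smul_left, dot3_cross3_left, mul_zero]

theorem dot3_unit3_cross3_right (a b : Fin 3 → ℝ) : dot3 b (unit3 (cross3 a b)) = 0 := by
  rw [dot3_comm, unit3, dot3_smul_left, dot3_cross3_right, mul_zero]

/-- The projection appearing in `Y = X - ⟨X, N⟩ N` and in `K` of `Ωcong`. -/
def perp3 (n x : Fin 3 → ℝ) : Fin 3 → ℝ := x - dot3 x n • n

/-- The derivative of `(n, x) ↦ perp3 n x` at `(n, x)` in the direction `(n', x')`. -/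
def perp3Deriv (n x n' x' : Fin 3 → ℝ) : Fin 3 → ℝ :=
  x' - (dot3 x' n + dot3 x n') • n - dot3 x n • n'

theorem dot3_perp3_self {n : Fin 3 → ℝ} (hn : dot3 n n = 1) (x : Fin 3 → ℝ) :
    dot3 (perp3 n x) n = 0 := by
  simp [perp3, dot3_sub_left, dot3_smul_left, hn]

theorem Ωcong_perp3Deriv {n x e V : Fin 3 → ℝ} (h κ : ℝ) (hn : dot3 n n = 1)
    (he : dot3 e n = 0) (hV : dot3 V n = 0) :
    Ωcong n (V, perp3Deriv n x V (h • n)) (κ • e, perp3Deriv n x (κ • e) e) = -dot3 V e := by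
  have hK₁ : perp3 n (perp3Deriv n x V (h • n)) = -dot3 x n • V := by
    simp only [perp3, perp3Deriv, dot3_sub_left, dot3_smul_left, hn, hV]
    module
  have hK₂ : perp3 n (perp3Deriv n x (κ • e) e) = (1 - κ * dot3 x n) • e := by
    simp only [perp3, perp3Deriv, dot3_sub_left, dot3_smul_left, dot3_smul_right, hn, he]
    module
  change dot3 (perp3 n _) _ - dot3 _ (perp3 n _) = _
  rw [hK₁, hK₂, dot3_smul_left, dot3_smul_right, dot3_smul_right]
  ring

section Differentiability

variable {E : Type*} [NormedAddCommGroup E] [NormedSpace ℝ E]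

theorem DifferentiableAt.dot3 {f g : E → Fin 3 → ℝ} {x : E} (hf : DifferentiableAt ℝ f x)
    (hg : DifferentiableAt ℝ g x) : DifferentiableAt ℝ (fun y => dot3 (f y) (g y)) x :=
  (dot3L.hasFDerivAt_of_bilinear hf.hasFDerivAt hg.hasFDerivAt).differentiableAt

theorem fderiv_dot3_apply {f g : E → Fin 3 → ℝ} {x : E} (hf : DifferentiableAt ℝ f x)
    (hg : DifferentiableAt ℝ g x) (v : E) :
    fderiv ℝ (fun y => dot3 (f y) (g y)) x v =
      dot3 (fderiv ℝ f x v) (g x) + dot3 (f x) (fderiv ℝ g x v) := by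
  rw [show (fun y => dot3 (f y) (g y)) = fun y => dot3L (f y) (g y) from rfl,
    dot3L.fderiv_of_bilinear hf hg]
  simp [add_comm]

theorem DifferentiableAt.cross3 {f g : E → Fin 3 → ℝ} {x : E} (hf : DifferentiableAt ℝ f x)
    (hg : DifferentiableAt ℝ g x) : DifferentiableAt ℝ (fun y => cross3 (f y) (g y)) x :=
  (cross3L.hasFDerivAt_of_bilinear hf.hasFDerivAt hg.hasFDerivAt).differentiableAt

theorem DifferentiableAt.unit3 {f : E → Fin 3 → ℝ} {x : E} (hf : DifferentiableAt ℝ f x)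
    (hx : f x ≠ 0) : DifferentiableAt ℝ (fun y => unit3 (f y)) x := by
  have hpos := dot3_self_pos hx
  exact (((hf.dot3 hf).sqrt hpos.ne').inv (Real.sqrt_pos.mpr hpos).ne').smul hf

theorem DifferentiableAt.perp3 {f g : E → Fin 3 → ℝ} {x : E} (hg : DifferentiableAt ℝ g x)
    (hf : DifferentiableAt ℝ f x) : DifferentiableAt ℝ (fun y => perp3 (g y) (f y)) x :=
  hf.sub ((hf.dot3 hg).smul hg)

theorem fderiv_perp3_apply {f g : E → Fin 3 → ℝ} {x : E} (hg : DifferentiableAt ℝ g x)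
    (hf : DifferentiableAt ℝ f x) (v : E) :
    fderiv ℝ (fun y => perp3 (g y) (f y)) x v =
      perp3Deriv (g x) (f x) (fderiv ℝ g x v) (fderiv ℝ f x v) := by
  have hfg := hf.dot3 hg
  simp only [perp3]
  rw [fderiv_fun_sub hf (hfg.fun_smul hg), fderiv_fun_smul hfg hg]
  simp only [sub_apply, add_apply, smul_apply, ContinuousLinearMap.smulRight_apply,
    fderiv_dot3_apply hf hg, perp3Deriv]
  module

theorem fderiv_add_mul_smul_apply {F : Type*} [NormedAddCommGroup F] [NormedSpace ℝ F]
    {X N : E → F} {h : E → ℝ} {p : E} (hX : DifferentiableAt ℝ X p)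
    (hh : DifferentiableAt ℝ h p) (hN : DifferentiableAt ℝ N p) (ε : ℝ) (v : E) :
    fderiv ℝ (fun q => X q + (ε * h q) • N q) p v =
      fderiv ℝ X p v + ε • (fderiv ℝ h p v • N p + h p • fderiv ℝ N p v) := by
  simp_rw [mul_smul]
  rw [fderiv_fun_add hX ((hh.fun_smul hN).fun_const_smul ε),
    fderiv_fun_const_smul (hh.fun_smul hN), fderiv_fun_smul hh hN]
  simp [add_comm]

end Differentiability

theorem HasDerivAt.dot3 {f g : ℝ → Fin 3 → ℝ} {f' g' : Fin 3 → ℝ} {t : ℝ}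
    (hf : HasDerivAt f f' t) (hg : HasDerivAt g g' t) :
    HasDerivAt (fun s => dot3 (f s) (g s)) (dot3 f' (g t) + dot3 (f t) g') t := by
  simpa [add_comm] using dot3L.hasDerivAt_of_bilinear (fun _ => hf) (fun _ => hg)

theorem HasDerivAt.cross3 {f g : ℝ → Fin 3 → ℝ} {f' g' : Fin 3 → ℝ} {t : ℝ}
    (hf : HasDerivAt f f' t) (hg : HasDerivAt g g' t) :
    HasDerivAt (fun s => cross3 (f s) (g s)) (cross3 f' (g t) + cross3 (f t) g') t := by
  simpa [add_comm] using cross3L.hasDerivAt_of_bilinear (fun _ => hf) (fun _ => hg)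

theorem HasDerivAt.unit3 {f : ℝ → Fin 3 → ℝ} {f' : Fin 3 → ℝ} {t : ℝ} (hf : HasDerivAt f f' t)
    (ht : f t ≠ 0) :
    HasDerivAt (fun s => unit3 (f s)) ((norm3 (f t))⁻¹ • perp3 (unit3 (f t)) f') t := by
  have hpos := dot3_self_pos ht
  have hr : norm3 (f t) ≠ 0 := (Real.sqrt_pos.mpr hpos).ne'
  refine ((((hf.dot3 hf).sqrt hpos.ne').fun_inv hr).fun_smul hf).congr_deriv ?_
  simp only [perp3, _root_.unit3, norm3, dot3_smul_right, dot3_comm f' (f t), smul_sub,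
    smul_smul]
  match_scalars <;> field_simp
  ring

theorem HasDerivAt.perp3 {f g : ℝ → Fin 3 → ℝ} {f' g' : Fin 3 → ℝ} {t : ℝ}
    (hg : HasDerivAt g g' t) (hf : HasDerivAt f f' t) :
    HasDerivAt (fun s => perp3 (g s) (f s)) (perp3Deriv (g t) (f t) g' f') t := by
  have := (hg.differentiableAt.perp3 hf.differentiableAt).hasDerivAt
  rwa [← fderiv_apply_one_eq_deriv, fderiv_perp3_apply hg.differentiableAt hf.differentiableAt,
    fderiv_apply_one_eq_deriv, fderiv_apply_one_eq_deriv, hg.deriv, hf.deriv] at this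

/-- The velocity of the unit normal `unit3 (a × b)` when the frame `(a, b)` moves with
velocity `(a', b')`. -/
def gaussVariation (a b a' b' : Fin 3 → ℝ) : Fin 3 → ℝ :=
  (norm3 (cross3 a b))⁻¹ • perp3 (unit3 (cross3 a b)) (cross3 a' b + cross3 a b')

theorem hasDerivAt_unit3_cross3_line (a b a' b' : Fin 3 → ℝ) (hab : cross3 a b ≠ 0) :
    HasDerivAt (fun ε : ℝ => unit3 (cross3 (a + ε • a') (b + ε • b')))
      (gaussVariation a b a' b') 0 := by
  have hline (u w : Fin 3 → ℝ) : HasDerivAt (fun ε : ℝ => u + ε • w) w 0 := by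
    simpa using ((hasDerivAt_id (0 : ℝ)).smul_const w).const_add u
  simpa [gaussVariation] using ((hline a a').cross3 (hline b b')).unit3 (by simpa using hab)

theorem dot3_gaussVariation_left (a b a' b' : Fin 3 → ℝ) :
    dot3 (gaussVariation a b a' b') a = -dot3 a' (unit3 (cross3 a b)) := by
  have htriple : dot3 (cross3 a' b + cross3 a b') a = -dot3 a' (cross3 a b) := by
    simp only [dot3_eq_dotProduct, cross3_eq_crossProduct]
    rw [add_dotProduct, dotProduct_comm _ a, dotProduct_comm _ a, dot_self_cross, add_zero,
      triple_product_permutation, ← cross_anticomm, dotProduct_neg]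
  simp only [gaussVariation, perp3, unit3, dot3_smul_left, dot3_sub_left, dot3_smul_right,
    dot3_cross3_left, htriple]
  ring

theorem dot3_gaussVariation_right (a b a' b' : Fin 3 → ℝ) :
    dot3 (gaussVariation a b a' b') b = -dot3 b' (unit3 (cross3 a b)) := by
  have htriple : dot3 (cross3 a' b + cross3 a b') b = -dot3 b' (cross3 a b) := by
    simp only [dot3_eq_dotProduct, cross3_eq_crossProduct]
    rw [add_dotProduct, dotProduct_comm _ b, dotProduct_comm _ b, dot_cross_self, zero_add,
      triple_product_permutation, triple_product_permutation, ← cross_anticomm, dotProduct_neg]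
  simp only [gaussVariation, perp3, unit3, dot3_smul_left, dot3_sub_left, dot3_smul_right,
    dot3_cross3_right, htriple]
  ring

theorem dot3_gaussVariation_unit3 {a b : Fin 3 → ℝ} (hab : cross3 a b ≠ 0) (a' b' : Fin 3 → ℝ) :
    dot3 (gaussVariation a b a' b') (unit3 (cross3 a b)) = 0 := by
  rw [gaussVariation, dot3_smul_left, dot3_perp3_self (dot3_unit3_self hab), mul_zero]

theorem Ωcong_gaussVariation_left {a b n : Fin 3 → ℝ} (hab : cross3 a b ≠ 0)
    (hn : n = unit3 (cross3 a b)) (x b' : Fin 3 → ℝ) (h h₁ s κ : ℝ) :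
    Ωcong n (gaussVariation a b (h₁ • n + s • a) b',
        perp3Deriv n x (gaussVariation a b (h₁ • n + s • a) b') (h • n))
      (κ • a, perp3Deriv n x (κ • a) a) = h₁ := by
  subst hn
  rw [Ωcong_perp3Deriv h κ (dot3_unit3_self hab) (dot3_unit3_cross3_left a b)
      (dot3_gaussVariation_unit3 hab _ _), dot3_gaussVariation_left, dot3_add_left,
    dot3_smul_left, dot3_smul_left, dot3_unit3_self hab, dot3_unit3_cross3_left]
  ring

theorem Ωcong_gaussVariation_right {a b n : Fin 3 → ℝ} (hab : cross3 a b ≠ 0)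
    (hn : n = unit3 (cross3 a b)) (x a' : Fin 3 → ℝ) (h h₂ s κ : ℝ) :
    Ωcong n (gaussVariation a b a' (h₂ • n + s • b),
        perp3Deriv n x (gaussVariation a b a' (h₂ • n + s • b)) (h • n))
      (κ • b, perp3Deriv n x (κ • b) b) = h₂ := by
  subst hn
  rw [Ωcong_perp3Deriv h κ (dot3_unit3_self hab) (dot3_unit3_cross3_right a b)
      (dot3_gaussVariation_unit3 hab _ _), dot3_gaussVariation_right, dot3_add_left,
    dot3_smul_left, dot3_smul_left, dot3_unit3_self hab, dot3_unit3_cross3_right]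
  ring

theorem ContDiffAt.differentiableAt_unit3_cross3_pd {X : ℝ × ℝ → Fin 3 → ℝ} {p : ℝ × ℝ}
    (hX : ContDiffAt ℝ 2 X p) (hp : cross3 (pd1 X p) (pd2 X p) ≠ 0) :
    DifferentiableAt ℝ (fun q => unit3 (cross3 (pd1 X q) (pd2 X q))) p := by
  have hDX : DifferentiableAt ℝ (fderiv ℝ X) p :=
    (hX.fderiv_right (m := 1) (by norm_num)).differentiableAt one_ne_zero
  exact ((hDX.clm_apply (differentiableAt_const _)).cross3
    (hDX.clm_apply (differentiableAt_const _))).unit3 hp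

theorem hasDerivAt_gaussMap_normalDeformation {X N : ℝ × ℝ → Fin 3 → ℝ} {h : ℝ × ℝ → ℝ}
    {p : ℝ × ℝ} (hX : DifferentiableAt ℝ X p) (hh : DifferentiableAt ℝ h p)
    (hN : DifferentiableAt ℝ N p) (hp : cross3 (pd1 X p) (pd2 X p) ≠ 0) {κ₁ κ₂ : ℝ}
    (hκ₁ : pd1 N p = κ₁ • pd1 X p) (hκ₂ : pd2 N p = κ₂ • pd2 X p) :
    HasDerivAt (fun ε : ℝ => unit3 (cross3 (pd1 (fun q => X q + (ε * h q) • N q) p)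
        (pd2 (fun q => X q + (ε * h q) • N q) p)))
      (gaussVariation (pd1 X p) (pd2 X p) (pd1 h p • N p + (h p * κ₁) • pd1 X p)
        (pd2 h p • N p + (h p * κ₂) • pd2 X p)) 0 := by
  simp only [pd1, pd2] at hκ₁ hκ₂ ⊢
  simp only [fderiv_add_mul_smul_apply hX hh hN, hκ₁, hκ₂, smul_smul]
  exact hasDerivAt_unit3_cross3_line _ _ _ _ hp

theorem normal_deformation_is_hamiltonian_general (U : Set (ℝ × ℝ)) (hU : IsOpen U)
    (X N : ℝ × ℝ → Fin 3 → ℝ) (lam mu : ℝ × ℝ → ℝ) (h : ℝ × ℝ → ℝ)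
    (hX : ContDiffOn ℝ 3 X U) (hh : ContDiffOn ℝ 2 h U)
    (himm : ∀ p ∈ U, cross3 (pd1 X p) (pd2 X p) ≠ 0)
    (hN : ∀ p ∈ U, N p = unit3 (cross3 (pd1 X p) (pd2 X p)))
    (hlam : ∀ p ∈ U, pd1 N p = lam p • pd1 X p)
    (hmu : ∀ p ∈ U, pd2 N p = mu p • pd2 X p)
    (Xe Ne Ye : ℝ → ℝ × ℝ → Fin 3 → ℝ)
    (hXe : ∀ ε q, Xe ε q = X q + (ε * h q) • N q)
    (hNe : ∀ ε q, Ne ε q = unit3 (cross3 (pd1 (Xe ε) q) (pd2 (Xe ε) q)))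
    (hYe : ∀ ε q, Ye ε q = Xe ε q - dot3 (Xe ε q) (Ne ε q) • Ne ε q)
    (Y : ℝ × ℝ → Fin 3 → ℝ) (hY : ∀ q, Y q = X q - dot3 (X q) (N q) • N q) :
    ∀ p ∈ U,
      Ωcong (N p) (deriv (fun ε => Ne ε p) 0, deriv (fun ε => Ye ε p) 0)
          (pd1 N p, pd1 Y p) = pd1 h p ∧
      Ωcong (N p) (deriv (fun ε => Ne ε p) 0, deriv (fun ε => Ye ε p) 0)
          (pd2 N p, pd2 Y p) = pd2 h p := by
  intro p hp
  have hUp : U ∈ nhds p := hU.mem_nhds hp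
  have hXd : DifferentiableAt ℝ X p := (hX.contDiffAt hUp).differentiableAt (by norm_num)
  have hhd : DifferentiableAt ℝ h p := (hh.contDiffAt hUp).differentiableAt (by norm_num)
  have hNd : DifferentiableAt ℝ N p :=
    (((hX.contDiffAt hUp).of_le (by norm_num)).differentiableAt_unit3_cross3_pd (himm p hp)
      ).congr_of_eventuallyEq (Filter.eventually_of_mem hUp hN)
  set V := gaussVariation (pd1 X p) (pd2 X p) (pd1 h p • N p + (h p * lam p) • pd1 X p)
    (pd2 h p • N p + (h p * mu p) • pd2 X p)
  have hV : HasDerivAt (fun ε => Ne ε p) V 0 := by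
    simpa only [hNe, show Xe = _ from funext₂ hXe] using
      hasDerivAt_gaussMap_normalDeformation hXd hhd hNd (himm p hp) (hlam p hp) (hmu p hp)
  have hW : HasDerivAt (fun ε => Ye ε p) (perp3Deriv (N p) (X p) V (h p • N p)) 0 := by
    have hXe' : HasDerivAt (fun ε => Xe ε p) (h p • N p) 0 := by
      simp_rw [hXe, mul_smul]
      simpa using ((hasDerivAt_id (0 : ℝ)).smul_const (h p • N p)).const_add (X p)
    convert hV.perp3 hXe' using 1
    · exact funext fun ε => hYe ε p
    · simp [hNe, show Xe 0 = X from funext (by simp [hXe]), hN p hp]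
  have hYfun : Y = fun q => perp3 (N q) (X q) := funext hY
  have hY₁ : pd1 Y p = perp3Deriv (N p) (X p) (pd1 N p) (pd1 X p) :=
    hYfun ▸ fderiv_perp3_apply hNd hXd _
  have hY₂ : pd2 Y p = perp3Deriv (N p) (X p) (pd2 N p) (pd2 X p) :=
    hYfun ▸ fderiv_perp3_apply hNd hXd _
  rw [hW.deriv, hV.deriv, hY₁, hY₂, hlam p hp, hmu p hp]
  exact ⟨Ωcong_gaussVariation_left (himm p hp) (hN p hp) _ _ _ _ _ _,
    Ωcong_gaussVariation_right (himm p hp) (hN p hp) _ _ _ _ _ _⟩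

/-- For a C³ immersion `X` with orthogonal curvature-line coordinates, unit normal
`N = (∂_s X × ∂_t X)/|∂_s X × ∂_t X|`, and a C² function `h`, consider the normal
deformation `Xᵉ = X + ε h N` with Gauss map `Nᵉ`, fibre `Yᵉ = Xᵉ − ⟨Xᵉ,Nᵉ⟩Nᵉ` and normal
congruence `X̄ᵉ = (Nᵉ, Yᵉ)`; let `V̄ = d/dε|₀ X̄ᵉ`. Then `Ω(V̄, ∂_s X̄) = ∂_s h` and
`Ω(V̄, ∂_t X̄) = ∂_t h`: the induced deformation of the normal congruence is Hamiltonian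
with Hamiltonian function `h`. -/
theorem normal_deformation_is_hamiltonian (U : Set (ℝ × ℝ)) (hU : IsOpen U)
    (X N : ℝ × ℝ → Fin 3 → ℝ) (lam mu : ℝ × ℝ → ℝ) (h : ℝ × ℝ → ℝ)
    (hX : ContDiffOn ℝ 3 X U) (hh : ContDiffOn ℝ 2 h U)
    (horth : ∀ p ∈ U, dot3 (pd1 X p) (pd2 X p) = 0)
    (himm : ∀ p ∈ U, cross3 (pd1 X p) (pd2 X p) ≠ 0)
    (hN : ∀ p ∈ U, N p = unit3 (cross3 (pd1 X p) (pd2 X p)))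
    (hlam : ∀ p ∈ U, pd1 N p = lam p • pd1 X p)
    (hmu : ∀ p ∈ U, pd2 N p = mu p • pd2 X p)
    (Xe Ne Ye : ℝ → ℝ × ℝ → Fin 3 → ℝ)
    (hXe : ∀ ε q, Xe ε q = X q + (ε * h q) • N q)
    (hNe : ∀ ε q, Ne ε q = unit3 (cross3 (pd1 (Xe ε) q) (pd2 (Xe ε) q)))
    (hYe : ∀ ε q, Ye ε q = Xe ε q - dot3 (Xe ε q) (Ne ε q) • Ne ε q)
    (Y : ℝ × ℝ → Fin 3 → ℝ) (hY : ∀ q, Y q = X q - dot3 (X q) (N q) • N q) :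
    ∀ p ∈ U,
      Ωcong (N p) (deriv (fun ε => Ne ε p) 0, deriv (fun ε => Ye ε p) 0)
          (pd1 N p, pd1 Y p) = pd1 h p ∧
      Ωcong (N p) (deriv (fun ε => Ne ε p) 0, deriv (fun ε => Ye ε p) 0)
          (pd2 N p, pd2 Y p) = pd2 h p :=
  normal_deformation_is_hamiltonian_general U hU X N lam mu h hX hh himm hN hlam hmu Xe Ne Ye hXe
    hNe hYe Y hY
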